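/- Let $p_1,\dots,p_N$ be positive reals and $n_1,\dots,n_N$ be reals, and define $q_{x,y} = 2^{n_y}/2^{n_x}$ and $k(x,y) = \frac{2}{q_{x,y} p_x + q_{y,x} p_y}$. Then the $N \times N$ matrix $(k(x,y))_{x,y}$ is positive semidefinite. -/

import Mathlib

/-!
Writing `a x = 2 ^ (nv x)`, the kernel is `k x y = 2 * a x⁻¹ * a y⁻¹ / (b x + b y)` with
`b x = p x / a x ^ 2 > 0`, i.e. twice a diagonal congruence of the Cauchy matrix `(b x + b y)⁻¹`.
The Cauchy matrix is a Gram matrix in `L²(0, ∞)`, since `(b x + b y)⁻¹ = ∫₀^∞ e^{-b x t} e^{-b y t} dt`.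
-/

open Matrix MeasureTheory Real Set

namespace Matrix

noncomputable def cauchyMatrix {ι : Type*} (b : ι → ℝ) : Matrix ι ι ℝ :=
  of fun i j => (b i + b j)⁻¹

lemma inv_eq_integral_exp_neg_mul_Ioi {s : ℝ} (hs : 0 < s) :
    s⁻¹ = ∫ t in Ioi (0 : ℝ), exp (-s * t) := by
  rw [integral_exp_mul_Ioi (neg_lt_zero.mpr hs)]
  simp

variable {ι : Type*} [Fintype ι] {b : ι → ℝ}

lemma dotProduct_cauchyMatrix_mulVec (hb : ∀ i, 0 < b i) (x : ι → ℝ) :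
    x ⬝ᵥ (cauchyMatrix b *ᵥ x) = ∫ t in Ioi (0 : ℝ), (∑ i, x i * exp (-b i * t)) ^ 2 := by
  have hpos : ∀ i j, 0 < b i + b j := fun i j => add_pos (hb i) (hb j)
  have hsq : ∀ t, (∑ i, x i * exp (-b i * t)) ^ 2
      = ∑ i, ∑ j, x i * x j * exp (-(b i + b j) * t) := fun t => by
    rw [sq, Finset.sum_mul_sum]
    refine Finset.sum_congr rfl fun i _ => Finset.sum_congr rfl fun j _ => ?_
    rw [neg_add, add_mul, exp_add]
    ring
  have hint : ∀ i j, IntegrableOn (fun t => x i * x j * exp (-(b i + b j) * t)) (Ioi 0) :=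
    fun i j => (integrableOn_exp_mul_Ioi (neg_lt_zero.mpr (hpos i j)) 0).const_mul _
  simp_rw [hsq]
  rw [integral_finsetSum _ fun i _ => integrable_finsetSum _ fun j _ => hint i j]
  refine Finset.sum_congr rfl fun i _ => ?_
  rw [integral_finsetSum _ fun j _ => hint i j, mulVec, dotProduct, Finset.mul_sum]
  refine Finset.sum_congr rfl fun j _ => ?_
  rw [integral_const_mul, ← inv_eq_integral_exp_neg_mul_Ioi (hpos i j), cauchyMatrix, of_apply]
  ring

theorem posSemidef_cauchyMatrix (hb : ∀ i, 0 < b i) : (cauchyMatrix b).PosSemidef := by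
  refine posSemidef_iff_dotProduct_mulVec.mpr ⟨?_, fun x => ?_⟩
  · ext i j
    simp [cauchyMatrix, add_comm]
  · rw [star_trivial, dotProduct_cauchyMatrix_mulVec hb]
    exact integral_nonneg fun t => sq_nonneg _

end Matrix

theorem stmt6 (N : ℕ) (p : Fin N → ℝ) (hp : ∀ x, 0 < p x) (nv : Fin N → ℝ) :
    (Matrix.of fun x y : Fin N =>
      2 / ((2 : ℝ) ^ (nv y) / (2 : ℝ) ^ (nv x) * p x
            + (2 : ℝ) ^ (nv x) / (2 : ℝ) ^ (nv y) * p y)).PosSemidef := by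
  set a : Fin N → ℝ := fun x => (2 : ℝ) ^ nv x
  have ha : ∀ x, 0 < a x := fun x => rpow_pos_of_pos two_pos _
  have hb : ∀ x, 0 < p x / a x ^ 2 := fun x => div_pos (hp x) (pow_pos (ha x) 2)
  have hk : (of fun x y => 2 / (a y / a x * p x + a x / a y * p y))
      = (2 : ℝ) • ((diagonal a⁻¹)ᴴ * cauchyMatrix (fun x => p x / a x ^ 2) * diagonal a⁻¹) := by
    ext x y
    have := (ha x).ne'
    have := (ha y).ne'
    simp only [of_apply, Matrix.smul_apply, diagonal_conjTranspose, mul_diagonal, diagonal_mul,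
      cauchyMatrix, Pi.inv_apply, star_trivial, smul_eq_mul]
    field_simp
  rw [hk]
  exact ((posSemidef_cauchyMatrix hb).conjTranspose_mul_mul_same _).smul zero_le_two
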